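/- arXiv:math/0211090 — 6 statements merged into one kernel-verified Lean document; each statement's English description precedes it below -/
import Mathlib

section
/- Let X be a set and R ⊆ X × X, and suppose p contains at least two distinct elements. Then R is an equivalence relation if and only if for all x, y ∈ X: xRy holds iff every function f ∈ F^=(R) satisfies f(x) = f(y). -/
/-- Proposition 3: R is an equivalence relation iff xRy holds exactly when
every function in `F^=(R)` identifies x and y. -/
theorem generality_prop3 {X P : Type*} (R : X → X → Prop)
    (p₀ p₁ : P) (hne : p₀ ≠ p₁) :
    Equivalence R ↔
      ∀ x y : X, (R x y ↔
        ∀ f : X → P, (∀ a b, R a b → f a = f b) → f x = f y) := by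
  classical
  constructor
  · intro hE x y
    constructor
    · intro hxy f hf
      exact hf _ _ hxy
    · intro h
      have := h (fun z => if R x z then p₀ else p₁) (by
        intro a b hab
        by_cases hxa : R x a
        · simp [hxa, hE.trans hxa hab]
        · have hxb : ¬ R x b := fun hxb => hxa (hE.trans hxb (hE.symm hab))
          simp [hxa, hxb])
      simp only [hE.refl x, if_true] at this
      by_contra hxy
      rw [if_neg hxy] at this
      exact hne this
  · intro H
    refine ⟨fun x => ?_, fun {x y} h => ?_, fun {x y z} h1 h2 => ?_⟩
    · exact (H x x).2 (fun f hf => rfl)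
    · exact (H y x).2 (fun f hf => ((H x y).1 h f hf).symm)
    · exact (H x z).2 (fun f hf => ((H x y).1 h1 f hf).trans ((H y z).1 h2 f hf))
end

section
/- The composition R₂ ∗ R₁ of arrows R₁ : n → m and R₂ : m → k in the category Gen (defined as the restriction of the transitive closure of R₁ ∪ R₂⁺ⁿ to positions in n and the final k block, with the middle m block removed and indices renumbered) is an equivalence relation on n + k. -/
/-- `R` is an equivalence relation on the finite ordinal `N` (as a subset of ℕ). -/
def IsEquivOn (R : ℕ → ℕ → Prop) (N : ℕ) : Prop :=
  (∀ x y, R x y → x < N ∧ y < N) ∧ (∀ x, x < N → R x x) ∧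
    (∀ x y, R x y → R y x) ∧ (∀ x y z, R x y → R y z → R x z)

/-- The relation `R⁺ᵏ`: shift `R` upwards by `k`. -/
def shiftRel (R : ℕ → ℕ → Prop) (k : ℕ) : ℕ → ℕ → Prop :=
  fun x y => k ≤ x ∧ k ≤ y ∧ R (x - k) (y - k)

/-- Transitive closure of `R₁ ∪ R₂⁺ⁿ`. -/
def glueRel (n : ℕ) (R₁ R₂ : ℕ → ℕ → Prop) : ℕ → ℕ → Prop :=
  Relation.TransGen (fun a b => R₁ a b ∨ shiftRel R₂ n a b)

/-- Renumbering of the outer blocks `n ∪ kⁿ⁺ᵐ` into `n + k`. -/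
def embOuter (n m : ℕ) (x : ℕ) : ℕ := if x < n then x else x + m

/-- Composition `R₂ ∗ R₁` in the category Gen: restrict the transitive closure
of `R₁ ∪ R₂⁺ⁿ` to the outer blocks and renumber. -/
def genComp (n m k : ℕ) (R₂ R₁ : ℕ → ℕ → Prop) : ℕ → ℕ → Prop :=
  fun x y => x < n + k ∧ y < n + k ∧
    glueRel n R₁ R₂ (embOuter n m x) (embOuter n m y)

/-- The identity arrow `1ₙ` of Gen: `x` and `y` are related iff `x ≡ y (mod n)`. -/
def genId (n : ℕ) : ℕ → ℕ → Prop :=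
  fun x y => x < n + n ∧ y < n + n ∧ x % n = y % n

theorem shiftRel_symm {R : ℕ → ℕ → Prop} {k x y : ℕ} (hR : ∀ a b, R a b → R b a)
    (h : shiftRel R k x y) : shiftRel R k y x :=
  ⟨h.2.1, h.1, hR _ _ h.2.2⟩

theorem glueRel_symm {n : ℕ} {R₁ R₂ : ℕ → ℕ → Prop} {x y : ℕ}
    (h₁ : ∀ a b, R₁ a b → R₁ b a) (h₂ : ∀ a b, R₂ a b → R₂ b a)
    (h : glueRel n R₁ R₂ x y) : glueRel n R₁ R₂ y x :=
  have : Std.Symm (fun a b => R₁ a b ∨ shiftRel R₂ n a b) :=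
    ⟨fun a b hab => hab.imp (h₁ a b) (shiftRel_symm h₂)⟩
  Std.Symm.symm (r := Relation.TransGen _) _ _ h

theorem glueRel_embOuter_self {n m k x : ℕ} {R₁ R₂ : ℕ → ℕ → Prop}
    (h₁ : ∀ a, a < n + m → R₁ a a) (h₂ : ∀ a, a < m + k → R₂ a a) (hx : x < n + k) :
    glueRel n R₁ R₂ (embOuter n m x) (embOuter n m x) := by
  refine .single ?_
  unfold embOuter
  split_ifs
  · exact .inl (h₁ x (by omega))
  · exact .inr ⟨by omega, by omega, h₂ _ (by omega)⟩

/-- The composition `R₂ ∗ R₁` of arrows of Gen is an equivalence relation on `n+k`. -/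
theorem genComp_isEquivOn (n m k : ℕ) (R₁ R₂ : ℕ → ℕ → Prop)
    (h₁ : IsEquivOn R₁ (n + m)) (h₂ : IsEquivOn R₂ (m + k)) :
    IsEquivOn (genComp n m k R₂ R₁) (n + k) := by
  obtain ⟨-, h₁refl, h₁symm, -⟩ := h₁
  obtain ⟨-, h₂refl, h₂symm, -⟩ := h₂
  refine ⟨fun x y h => ⟨h.1, h.2.1⟩, ?_, ?_, ?_⟩
  · exact fun x hx => ⟨hx, hx, glueRel_embOuter_self h₁refl h₂refl hx⟩
  · exact fun x y ⟨hx, hy, h⟩ => ⟨hy, hx, glueRel_symm h₁symm h₂symm h⟩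
  · exact fun x y z ⟨hx, _, h⟩ ⟨_, hz, h'⟩ => ⟨hx, hz, h.trans h'⟩
end

section
/- In the category Gen, composition with the identity arrow is neutral: for any arrow R : n → m, we have 1_m ∗ R = R and R ∗ 1_n = R, where 1_n is the equivalence relation on n + n relating x and y iff x ≡ y (mod n). -/
/-! The glued relation of `1 ∗ R` (or `R ∗ 1`) lives on `n + m` plus one extra
block of size `m` (resp. `n`), and the identity only links each point of the extra block to
its twin in the adjacent block. Folding the extra block onto its twin therefore maps every
gluing step into `R`, which gives `1 ∗ R ⊆ R`; conversely each outer point is joined to its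
twin by at most one identity step, so a single `R`-step between twins yields `R ⊆ 1 ∗ R`. -/

namespace Relation

variable {α β : Type*} {S : α → α → Prop} {R : β → β → Prop}

theorem TransGen.map_of_trans (hR : ∀ x y z, R x y → R y z → R x z) {f : α → β}
    (hf : ∀ a b, S a b → R (f a) (f b)) {a b : α} (hab : TransGen S a b) : R (f a) (f b) := by
  induction hab with
  | single h => exact hf _ _ h
  | tail _ h ih => exact hR _ _ _ ih (hf _ _ h)

theorem transGen_iff_of_retract (hS : ∀ a b, S a b → S b a)
    (hR : ∀ x y z, R x y → R y z → R x z) {f : α → β} {g : β → α}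
    (hf : ∀ a b, S a b → R (f a) (f b)) (hg : ∀ x y, R x y → S (g x) (g y))
    {a b : α} (ha : ReflTransGen S a (g (f a))) (hb : ReflTransGen S b (g (f b))) :
    TransGen S a b ↔ R (f a) (f b) := by
  have : Std.Symm S := ⟨hS⟩
  refine ⟨TransGen.map_of_trans hR hf, fun hab => ?_⟩
  exact TransGen.trans_right ha ((TransGen.single (hg _ _ hab)).trans_left (symm hb))

end Relation

open Relation

/-- `glueRel n R₁ R₂` unfolds to `TransGen (glueStep n R₁ R₂)`. -/
def glueStep (n : ℕ) (R₁ R₂ : ℕ → ℕ → Prop) : ℕ → ℕ → Prop :=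
  fun a b => R₁ a b ∨ shiftRel R₂ n a b

theorem glueStep_symm {n : ℕ} {R₁ R₂ : ℕ → ℕ → Prop} (h₁ : ∀ x y, R₁ x y → R₁ y x)
    (h₂ : ∀ x y, R₂ x y → R₂ y x) : ∀ a b, glueStep n R₁ R₂ a b → glueStep n R₁ R₂ b a := by
  rintro a b (hab | ⟨ha, hb, hab⟩)
  · exact .inl (h₁ _ _ hab)
  · exact .inr ⟨hb, ha, h₂ _ _ hab⟩

theorem genId_symm (n : ℕ) : ∀ x y, genId n x y → genId n y x :=
  fun _ _ ⟨hx, hy, h⟩ => ⟨hy, hx, h.symm⟩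

def collapse (c d a : ℕ) : ℕ := if a < c then a else a - d

theorem collapse_embOuter {n c d : ℕ} (hnc : n ≤ c) (hcd : c ≤ n + d) (x : ℕ) :
    collapse c d (embOuter n d x) = x := by
  unfold collapse embOuter
  split_ifs <;> omega

theorem genComp_eq {n m k : ℕ} {R₁ R₂ R : ℕ → ℕ → Prop}
    (hdom : ∀ x y, R x y → x < n + k ∧ y < n + k)
    (hglue : ∀ x y, x < n + k → y < n + k →
      (glueRel n R₁ R₂ (embOuter n m x) (embOuter n m y) ↔ R x y)) :
    genComp n m k R₂ R₁ = R := by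
  funext x y
  refine propext ⟨fun ⟨hx, hy, hg⟩ => (hglue x y hx hy).1 hg, fun hxy => ?_⟩
  obtain ⟨hx, hy⟩ := hdom x y hxy
  exact ⟨hx, hy, (hglue x y hx hy).2 hxy⟩

section

variable {n m : ℕ} {R : ℕ → ℕ → Prop}

theorem collapse_of_le_of_lt {a : ℕ} (ha : n ≤ a) (ha' : a < n + m + m) :
    collapse (n + m) m a = n + (a - n) % m := by
  unfold collapse
  split_ifs with h
  · rw [Nat.mod_eq_of_lt (by omega)]; omega
  · rw [Nat.mod_eq_sub_mod (by omega), Nat.mod_eq_of_lt (by omega)]; omega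

theorem collapse_of_lt {a : ℕ} (ha : a < n + n) : collapse n n a = a % n := by
  unfold collapse
  split_ifs with h
  · rw [Nat.mod_eq_of_lt h]
  · rw [Nat.mod_eq_sub_mod (by omega), Nat.mod_eq_of_lt (by omega)]

theorem glueStep_genId_left (h : IsEquivOn R (n + m)) {a b : ℕ}
    (hab : glueStep n R (genId m) a b) : R (collapse (n + m) m a) (collapse (n + m) m b) := by
  obtain ⟨hdom, hrefl, -, -⟩ := h
  rcases hab with hab | ⟨ha, hb, ha', hb', hmod⟩
  · obtain ⟨ha, hb⟩ := hdom a b hab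
    simpa only [collapse, if_pos ha, if_pos hb] using hab
  · rw [collapse_of_le_of_lt ha (by omega), collapse_of_le_of_lt hb (by omega), hmod]
    exact hrefl _ (by have := Nat.mod_lt (b - n) (show 0 < m by omega); omega)

theorem glueStep_genId_right (h : IsEquivOn R (n + m)) {a b : ℕ}
    (hab : glueStep n (genId n) R a b) : R (collapse n n a) (collapse n n b) := by
  obtain ⟨-, hrefl, -, -⟩ := h
  rcases hab with ⟨ha, hb, hmod⟩ | ⟨ha, hb, hab⟩
  · rw [collapse_of_lt ha, collapse_of_lt hb, hmod]
    exact hrefl _ (by have := Nat.mod_lt b (show 0 < n by omega); omega)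
  · have hna : ¬a < n := by omega
    have hnb : ¬b < n := by omega
    simpa only [collapse, if_neg hna, if_neg hnb] using hab

theorem reflTransGen_embOuter_left {x : ℕ} (hx : x < n + m) :
    ReflTransGen (glueStep n R (genId m)) (embOuter n m x) x := by
  unfold embOuter
  split_ifs with hxn
  · exact .refl
  · refine .single (.inr ⟨by omega, by omega, by omega, by omega, ?_⟩)
    rw [show x + m - n = x - n + m by omega, Nat.add_mod_right]

theorem reflTransGen_embOuter_right {x : ℕ} :
    ReflTransGen (glueStep n (genId n) R) (embOuter n n x) (x + n) := by
  unfold embOuter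
  split_ifs with hxn
  · exact .single (.inl ⟨by omega, by omega, (Nat.add_mod_right x n).symm⟩)
  · exact .refl

theorem glueRel_genId_left_iff (h : IsEquivOn R (n + m)) {x y : ℕ} (hx : x < n + m)
    (hy : y < n + m) : glueRel n R (genId m) (embOuter n m x) (embOuter n m y) ↔ R x y := by
  have hret := collapse_embOuter (n := n) (c := n + m) (d := m) (Nat.le_add_right n m) le_rfl
  have := transGen_iff_of_retract (a := embOuter n m x) (b := embOuter n m y)
    (glueStep_symm h.2.2.1 (genId_symm m)) h.2.2.2
    (fun _ _ => glueStep_genId_left h) (f := collapse (n + m) m) (g := id) (fun _ _ => .inl)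
    (by rw [hret]; exact reflTransGen_embOuter_left hx)
    (by rw [hret]; exact reflTransGen_embOuter_left hy)
  rwa [hret, hret] at this

theorem glueRel_genId_right_iff (h : IsEquivOn R (n + m)) {x y : ℕ} :
    glueRel n (genId n) R (embOuter n n x) (embOuter n n y) ↔ R x y := by
  have hret := collapse_embOuter (n := n) (c := n) (d := n) le_rfl (Nat.le_add_right n n)
  have := transGen_iff_of_retract (a := embOuter n n x) (b := embOuter n n y)
    (glueStep_symm (genId_symm n) h.2.2.1) h.2.2.2
    (fun _ _ => glueStep_genId_right h) (f := collapse n n) (g := (· + n))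
    (fun x y hxy => .inr ⟨Nat.le_add_left n x, Nat.le_add_left n y, by simpa using hxy⟩)
    (by rw [hret]; exact reflTransGen_embOuter_right)
    (by rw [hret]; exact reflTransGen_embOuter_right)
  rwa [hret, hret] at this

end

/-- Composition with identity arrows in Gen is neutral. -/
theorem genComp_id (n m : ℕ) (R : ℕ → ℕ → Prop) (h : IsEquivOn R (n + m)) :
    genComp n m m (genId m) R = R ∧ genComp n n m R (genId n) = R :=
  ⟨genComp_eq h.1 fun _ _ hx hy => glueRel_genId_left_iff h hx hy,
    genComp_eq h.1 fun _ _ _ _ => glueRel_genId_right_iff h⟩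
end

section
/- For p ≥ 2, F_p preserves composition: for arrows R₁ : n → m and R₂ : m → k of Gen, F_p(R₂ ∗ R₁) = F_p(R₂) ∘ F_p(R₁), where ∘ is ordinary composition of binary relations. Equivalently: for f₁ : n → p and f₂ : k → p, [f₁,f₂] ∈ F^=(R₂ ∗ R₁) iff there exists f₃ : m → p with [f₁,f₃] ∈ F^=(R₁) and [f₃,f₂] ∈ F^=(R₂). -/
/-- The concatenation `[f₁, f₂] : n + m → p` of `f₁ : n → p` and `f₂ : m → p`. -/
def concatFn {α : Type*} (n : ℕ) (f₁ f₂ : ℕ → α) : ℕ → α :=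
  fun x => if x < n then f₁ x else f₂ (x - n)

/-- Proposition 4 (main case): `F_p` preserves composition.  `[f₁,f₂]` is
compatible with `R₂ ∗ R₁` iff there is an `f₃ : m → p` such that `[f₁,f₃]` is
compatible with `R₁` and `[f₃,f₂]` is compatible with `R₂`. -/
theorem Fp_preserves_comp (p n m k : ℕ) (hp : 2 ≤ p) (R₁ R₂ : ℕ → ℕ → Prop)
    (h₁ : IsEquivOn R₁ (n + m)) (h₂ : IsEquivOn R₂ (m + k))
    (f₁ f₂ : ℕ → Fin p) :
    (∀ x y, genComp n m k R₂ R₁ x y →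
        concatFn n f₁ f₂ x = concatFn n f₁ f₂ y) ↔
      ∃ f₃ : ℕ → Fin p,
        (∀ x y, R₁ x y → concatFn n f₁ f₃ x = concatFn n f₁ f₃ y) ∧
        (∀ x y, R₂ x y → concatFn m f₃ f₂ x = concatFn m f₃ f₂ y) := by
  classical
  obtain ⟨hb₁, hr₁, hs₁, ht₁⟩ := h₁
  obtain ⟨hb₂, hr₂, hs₂, ht₂⟩ := h₂
  set B : ℕ → ℕ → Prop := fun a b => R₁ a b ∨ shiftRel R₂ n a b with hB
  have Bsymm : ∀ a b, B a b → B b a := by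
    rintro a b (h | ⟨ha, hb, h⟩)
    · exact Or.inl (hs₁ _ _ h)
    · exact Or.inr ⟨hb, ha, hs₂ _ _ h⟩
  have Tsymm : ∀ a b, glueRel n R₁ R₂ a b → glueRel n R₁ R₂ b a := by
    intro a b hab
    induction hab with
    | single h => exact Relation.TransGen.single (Bsymm _ _ h)
    | tail _ hstep ih =>
        exact Relation.TransGen.trans (Relation.TransGen.single (Bsymm _ _ hstep)) ih
  have Bbound : ∀ a b, B a b → a < n + m + k ∧ b < n + m + k := by
    rintro a b (h | ⟨ha, hb, h⟩)
    · have := hb₁ _ _ h; omega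
    · have := hb₂ _ _ h; omega
  have Tbound : ∀ a b, glueRel n R₁ R₂ a b → a < n + m + k ∧ b < n + m + k := by
    intro a b hab
    induction hab with
    | single h => exact Bbound _ _ h
    | tail _ hstep ih => exact ⟨ih.1, (Bbound _ _ hstep).2⟩
  -- outer value function
  set O : ℕ → Fin p := fun y => if y < n then f₁ y else f₂ (y - (n + m)) with hO
  constructor
  · -- forward direction
    intro H
    have keyO : ∀ y y', (y < n ∨ n + m ≤ y) → (y' < n ∨ n + m ≤ y') →
        glueRel n R₁ R₂ y y' → O y = O y' := by
      intro y y' hy hy' hT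
      have hbd := Tbound _ _ hT
      set x := if y < n then y else y - m with hx
      set x' := if y' < n then y' else y' - m with hx'
      have hex : embOuter n m x = y := by
        simp only [embOuter, hx]; split
        · simp <;> omega
        · rename_i h
          have : ¬ (y - m < n) := by omega
          simp [this]; omega
      have hex' : embOuter n m x' = y' := by
        simp only [embOuter, hx']; split
        · simp <;> omega
        · rename_i h
          have : ¬ (y' - m < n) := by omega
          simp [this]; omega
      have hcomp : genComp n m k R₂ R₁ x x' := by
        refine ⟨?_, ?_, by rw [hex, hex']; exact hT⟩
        · simp only [hx]; split <;> omega
        · simp only [hx']; split <;> omega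
      have := H _ _ hcomp
      have e1 : concatFn n f₁ f₂ x = O y := by
        simp only [concatFn, hO, hx]
        rcases hy with hy | hy
        · simp [hy]
        · have h1 : ¬ (y < n) := by omega
          have h2 : ¬ (y - m < n) := by omega
          simp [h1, h2]
          congr 1; omega
      have e2 : concatFn n f₁ f₂ x' = O y' := by
        simp only [concatFn, hO, hx']
        rcases hy' with hy' | hy'
        · simp [hy']
        · have h1 : ¬ (y' < n) := by omega
          have h2 : ¬ (y' - m < n) := by omega
          simp [h1, h2]
          congr 1; omega
      rw [← e1, ← e2]; exact this
    set f₃ : ℕ → Fin p := fun j =>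
      if h : ∃ y, (y < n ∨ n + m ≤ y) ∧ glueRel n R₁ R₂ (n + j) y then O h.choose
      else f₁ 0 with hf₃
    have hval : ∀ j y, (y < n ∨ n + m ≤ y) → glueRel n R₁ R₂ (n + j) y → f₃ j = O y := by
      intro j y hy hT
      have hex : ∃ y, (y < n ∨ n + m ≤ y) ∧ glueRel n R₁ R₂ (n + j) y := ⟨y, hy, hT⟩
      simp only [hf₃, dif_pos hex]
      exact keyO _ _ hex.choose_spec.1 hy
        (Relation.TransGen.trans (Tsymm _ _ hex.choose_spec.2) hT)
    have hmid : ∀ j j', glueRel n R₁ R₂ (n + j) (n + j') → f₃ j = f₃ j' := by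
      intro j j' hT
      by_cases h : ∃ y, (y < n ∨ n + m ≤ y) ∧ glueRel n R₁ R₂ (n + j) y
      · obtain ⟨y, hy, hTy⟩ := h
        rw [hval j y hy hTy,
          hval j' y hy (Relation.TransGen.trans (Tsymm _ _ hT) hTy)]
      · have h' : ¬ ∃ y, (y < n ∨ n + m ≤ y) ∧ glueRel n R₁ R₂ (n + j') y := by
          rintro ⟨y, hy, hTy⟩
          exact h ⟨y, hy, Relation.TransGen.trans hT hTy⟩
        simp only [hf₃, dif_neg h, dif_neg h']
    refine ⟨f₃, ?_, ?_⟩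
    · intro x y hR
      have hbd := hb₁ _ _ hR
      have hT : glueRel n R₁ R₂ x y := Relation.TransGen.single (Or.inl hR)
      simp only [concatFn]
      by_cases hx : x < n <;> by_cases hy : y < n <;> simp [hx, hy]
      · have := keyO x y (Or.inl hx) (Or.inl hy) hT
        simpa [hO, hx, hy] using this
      · have hyn : n + (y - n) = y := by omega
        have := hval (y - n) x (Or.inl hx) (by rw [hyn]; exact Tsymm _ _ hT)
        rw [this]; simp [hO, hx]
      · have hxn : n + (x - n) = x := by omega
        have := hval (x - n) y (Or.inl hy) (by rw [hxn]; exact hT)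
        rw [this]; simp [hO, hy]
      · have hxn : n + (x - n) = x := by omega
        have hyn : n + (y - n) = y := by omega
        exact hmid (x - n) (y - n) (by rw [hxn, hyn]; exact hT)
    · intro x y hR
      have hbd := hb₂ _ _ hR
      have hT : glueRel n R₁ R₂ (n + x) (n + y) := by
        refine Relation.TransGen.single (Or.inr ⟨by omega, by omega, ?_⟩)
        simpa using hR
      simp only [concatFn]
      by_cases hx : x < m <;> by_cases hy : y < m <;> simp [hx, hy]
      · exact hmid x y hT
      · have := hval x (n + y) (Or.inr (by omega)) hT
        rw [this]
        have h1 : ¬ (n + y < n) := by omega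
        simp [hO, h1]; congr 1; omega
      · have := hval y (n + x) (Or.inr (by omega)) (Tsymm _ _ hT)
        rw [this]
        have h1 : ¬ (n + x < n) := by omega
        simp [hO, h1]; congr 1; omega
      · have := keyO (n + x) (n + y) (Or.inr (by omega)) (Or.inr (by omega)) hT
        have h1 : ¬ (n + x < n) := by omega
        have h2 : ¬ (n + y < n) := by omega
        simp only [hO, if_neg h1, if_neg h2] at this
        convert this using 2 <;> omega
  · -- reverse direction
    rintro ⟨f₃, hA, hB2⟩
    intro x y ⟨hx, hy, hT⟩
    set g : ℕ → Fin p := fun z =>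
      if z < n then f₁ z else if z < n + m then f₃ (z - n) else f₂ (z - (n + m)) with hg
    have gstep : ∀ a b, B a b → g a = g b := by
      rintro a b (h | ⟨ha, hb, h⟩)
      · have hbd := hb₁ _ _ h
        have := hA _ _ h
        have e : ∀ z, z < n + m → g z = concatFn n f₁ f₃ z := by
          intro z hz
          simp only [hg, concatFn]
          by_cases h1 : z < n <;> simp [h1, hz]
        rw [e a hbd.1, e b hbd.2]; exact this
      · have hbd := hb₂ _ _ h
        have := hB2 _ _ h
        have e : ∀ z, n ≤ z → z - n < m + k → g z = concatFn m f₃ f₂ (z - n) := by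
          intro z hz1 hz2
          simp only [hg, concatFn]
          by_cases h1 : z < n + m
          · have h2 : z - n < m := by omega
            have h3 : ¬ (z < n) := by omega
            simp [h1, h2, h3]
          · have h2 : ¬ (z - n < m) := by omega
            have h3 : ¬ (z < n) := by omega
            simp [h1, h2, h3]; congr 1; omega
        rw [e a ha hbd.1, e b hb hbd.2]; exact this
    have gT : ∀ a b, glueRel n R₁ R₂ a b → g a = g b := by
      intro a b hab
      induction hab with
      | single h => exact gstep _ _ h
      | tail _ hstep ih => exact ih.trans (gstep _ _ hstep)
    have := gT _ _ hT
    have e : ∀ z, z < n + k → concatFn n f₁ f₂ z = g (embOuter n m z) := by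
      intro z hz
      simp only [concatFn, embOuter, hg]
      by_cases h1 : z < n
      · simp [h1]
      · have h2 : ¬ (z + m < n) := by omega
        have h3 : ¬ (z + m < n + m) := by omega
        simp [h1, h2, h3]; congr 1; omega
    rw [e x hx, e y hy]; exact this
end

section
/- For p ≥ 2, the functor F_p : Gen → Rel is faithful: if F_p(R₁) = F_p(R₂) for arrows R₁, R₂ : n → m of Gen, then R₁ = R₂. -/
open Classical in
lemma aux_sub (p n m : ℕ) (hp : 2 ≤ p) (R₁ R₂ : ℕ → ℕ → Prop)
    (h₁ : IsEquivOn R₁ (n + m)) (h₂ : IsEquivOn R₂ (n + m))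
    (h : ∀ f₁ f₂ : ℕ → Fin p,
      (∀ x y, R₂ x y → concatFn n f₁ f₂ x = concatFn n f₁ f₂ y) →
      (∀ x y, R₁ x y → concatFn n f₁ f₂ x = concatFn n f₁ f₂ y)) :
    ∀ x y, R₁ x y → R₂ x y := by
  intro x y hxy
  by_contra hne
  set g : ℕ → Fin p := fun z => if R₂ x z then ⟨1, lt_of_lt_of_le one_lt_two hp⟩ else ⟨0, lt_of_lt_of_le two_pos hp⟩ with hg
  have hcat : ∀ z, concatFn n g (fun w => g (w + n)) z = g z := by
    intro z
    unfold concatFn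
    split
    · rfl
    · rename_i hz
      simp [Nat.sub_add_cancel (le_of_not_gt hz)]
  have hconst : ∀ a b, R₂ a b → concatFn n g (fun w => g (w + n)) a = concatFn n g (fun w => g (w + n)) b := by
    intro a b hab
    rw [hcat, hcat, hg]
    simp only
    have : R₂ x a ↔ R₂ x b := ⟨fun h' => h₂.2.2.2 x a b h' hab, fun h' => h₂.2.2.2 x b a h' (h₂.2.2.1 a b hab)⟩
    by_cases hxa : R₂ x a
    · rw [if_pos hxa, if_pos (this.mp hxa)]
    · rw [if_neg hxa, if_neg (fun hb => hxa (this.mpr hb))]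
  have := h g (fun w => g (w + n)) hconst x y hxy
  rw [hcat, hcat, hg] at this
  simp only at this
  rw [if_pos (h₂.2.1 x (h₁.1 x y hxy).1), if_neg hne] at this
  exact absurd (Fin.mk.injEq .. ▸ this) one_ne_zero

/-- Proposition 5: the functor `F_p` is faithful. -/
theorem Fp_faithful (p n m : ℕ) (hp : 2 ≤ p) (R₁ R₂ : ℕ → ℕ → Prop)
    (h₁ : IsEquivOn R₁ (n + m)) (h₂ : IsEquivOn R₂ (n + m))
    (h : ∀ f₁ f₂ : ℕ → Fin p,
      (∀ x y, R₁ x y → concatFn n f₁ f₂ x = concatFn n f₁ f₂ y) ↔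
      (∀ x y, R₂ x y → concatFn n f₁ f₂ x = concatFn n f₁ f₂ y)) :
    R₁ = R₂ := by
  funext x y
  apply propext
  constructor
  · exact aux_sub p n m hp R₁ R₂ h₁ h₂ (fun f₁ f₂ => (h f₁ f₂).mpr) x y
  · exact aux_sub p n m hp R₂ R₁ h₂ h₁ (fun f₁ f₂ => (h f₁ f₂).mp) x y
end

section
/- The composition in Gen of two diagrams is a diagram when restricted appropriately: if R₁ : n → m and R₂ : m → k are arrows of Gen all of whose equivalence classes are two-element sets (diagrams), then every equivalence class of R₂ ∗ R₁ : n → k is also a two-element set. -/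
/-- Every equivalence class of `R` on `N` is a two-element set
(`R` is a diagram). -/
def TwoElementClasses (R : ℕ → ℕ → Prop) (N : ℕ) : Prop :=
  ∀ x, x < N → ∃ y, y ≠ x ∧ R x y ∧ ∀ z, R x z → z = x ∨ z = y

/-!
A diagram `R` on `N` is the same thing as its partner map: the fixed-point-free involution of
`[0, N)` swapping the two elements of each class, extended by the identity. Gluing `R₁` and
`R₂⁺ⁿ` thus gives the graph with edges `a — f a` and `a — g a` for two involutions `f`, `g`;
the middle points `[n, n + m)` are moved by both, the outer points by exactly one of them.

From an outer point `x`, with `g x = x` say, walk alternately along `f` and `g`. Since `g x = x`,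
the two neighbours of the `t`-th point are the `(t ± 1)`-st ones, so the visited points are closed
under `f` and `g` once the walk stops (reaches a point fixed by the next involution). A repetition
before the first stop is impossible: at odd distance it reflects inward to an earlier stop, at
even distance it translates back to a return to `x`, which is itself preceded by a stop. So by
finiteness the walk stops at a point `y ≠ x`, and `x`, `y` are the only outer points of the class.
-/

open Function Relation

section AlternatingWalk

variable {α : Type*} (f g : α → α)

def stepRel (a b : α) : Prop := b = f a ∨ b = g a

def altMap (t : ℕ) : α → α := if Even t then f else g

def altWalk (x : α) : ℕ → α
  | 0 => x
  | t + 1 => altMap f g t (altWalk x t)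

variable {f g}

lemma stepRel_comm : stepRel f g = stepRel g f := by
  ext a b
  exact or_comm

lemma altMap_cases (t : ℕ) :
    (altMap f g t = f ∧ altMap f g (t + 1) = g) ∨ (altMap f g t = g ∧ altMap f g (t + 1) = f) := by
  by_cases ht : Even t <;> simp [altMap, Nat.even_add_one, ht]

lemma altMap_add_of_even {d : ℕ} (hd : Even d) (t : ℕ) : altMap f g (t + d) = altMap f g t := by
  simp [altMap, Nat.even_add, hd]

lemma altMap_involutive (hf : Involutive f) (hg : Involutive g) (t : ℕ) :
    Involutive (altMap f g t) := by
  unfold altMap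
  split_ifs
  exacts [hf, hg]

lemma stepRel_altMap (a : α) (t : ℕ) : stepRel f g a (altMap f g t a) := by
  rcases altMap_cases (f := f) (g := g) t with ⟨h, -⟩ | ⟨h, -⟩ <;> simp [stepRel, h]

lemma reflTransGen_altWalk (x : α) (t : ℕ) :
    ReflTransGen (stepRel f g) x (altWalk f g x t) := by
  induction t with
  | zero => exact .refl
  | succ t ih => exact ih.tail (stepRel_altMap _ t)

lemma mem_of_reflTransGen_stepRel {T : Set α} {x z : α} (hfT : Set.MapsTo f T T)
    (hgT : Set.MapsTo g T T) (hx : x ∈ T) (hxz : ReflTransGen (stepRel f g) x z) : z ∈ T := by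
  induction hxz with
  | refl => exact hx
  | tail _ hab ih => rcases hab with rfl | rfl; exacts [hfT ih, hgT ih]

variable {x : α} (hf : Involutive f) (hg : Involutive g) (hx : g x = x)
include hf hg hx

lemma altMap_succ_altWalk (t : ℕ) :
    altMap f g (t + 1) (altWalk f g x t) = altWalk f g x (t - 1) := by
  cases t with
  | zero => simpa [altMap, altWalk] using hx
  | succ s =>
    rw [show s + 1 + 1 = s + 2 by rfl, altMap_add_of_even even_two]
    exact altMap_involutive hf hg s _

lemma altWalk_zero_eq_of_eq_add {i d : ℕ} (hd : Even d)
    (h : altWalk f g x i = altWalk f g x (i + d)) : altWalk f g x 0 = altWalk f g x d := by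
  induction i with
  | zero => simpa using h
  | succ i ih =>
    apply ih
    have hi := altMap_succ_altWalk hf hg hx (i + 1)
    have hid := altMap_succ_altWalk hf hg hx (i + 1 + d)
    rw [← h, show i + 1 + d + 1 = i + 1 + 1 + d by omega, altMap_add_of_even hd, hi] at hid
    simpa [show i + 1 + d - 1 = i + d by omega] using hid

lemma exists_altWalk_succ_eq {i e : ℕ}
    (h : altWalk f g x i = altWalk f g x (i + (2 * e + 1))) :
    ∃ t, i ≤ t ∧ t ≤ i + e ∧ altWalk f g x (t + 1) = altWalk f g x t := by
  induction e generalizing i with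
  | zero => exact ⟨i, le_rfl, by omega, h.symm⟩
  | succ e ih =>
    have hj := altMap_succ_altWalk hf hg hx (i + (2 * (e + 1) + 1))
    rw [← h, show i + (2 * (e + 1) + 1) + 1 = i + 2 * (e + 2) by ring,
      altMap_add_of_even ⟨e + 2, by ring⟩] at hj
    obtain ⟨t, hit, hte, ht⟩ := ih (i := i + 1) (by rw [altWalk, hj]; congr 1; omega)
    exact ⟨t, by omega, by omega, ht⟩

lemma altWalk_ne_of_lt {L i j : ℕ} (hfx : f x ≠ x)
    (hL : ∀ t, 1 ≤ t → t < L → altWalk f g x (t + 1) ≠ altWalk f g x t)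
    (hij : i < j) (hjL : j ≤ L) : altWalk f g x i ≠ altWalk f g x j := by
  intro heq
  obtain ⟨d, rfl⟩ := Nat.exists_eq_add_of_lt hij
  rcases Nat.even_or_odd (d + 1) with hd | ⟨e, he⟩
  · have h0 := altWalk_zero_eq_of_eq_add hf hg hx hd heq
    have hback := altMap_succ_altWalk hf hg hx (d + 1)
    rw [← h0, show d + 1 + 1 = 1 + (d + 1) by ring, altMap_add_of_even hd] at hback
    exact hL d (by rcases hd with ⟨r, hr⟩; omega) (by omega)
      (h0.symm.trans (by simpa [altMap, altWalk, hx] using hback))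
  · obtain ⟨t, hit, hte, ht⟩ := exists_altWalk_succ_eq hf hg hx (e := e) (by rwa [← he])
    rcases Nat.eq_zero_or_pos t with rfl | htpos
    · exact hfx (by simpa [altMap, altWalk] using ht)
    · exact hL t htpos (by omega) ht

lemma altWalk_mem_of_reflTransGen {L : ℕ} (hL : altWalk f g x (L + 1) = altWalk f g x L)
    {z : α} (hz : ReflTransGen (stepRel f g) x z) : ∃ t ≤ L, altWalk f g x t = z := by
  induction hz with
  | refl => exact ⟨0, Nat.zero_le _, rfl⟩
  | tail _ hstep ih =>
    obtain ⟨t, htL, rfl⟩ := ih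
    have hfwd : ∃ s ≤ L, altWalk f g x s = altMap f g t (altWalk f g x t) := by
      rcases htL.lt_or_eq with htL | rfl
      · exact ⟨t + 1, htL, rfl⟩
      · exact ⟨t, le_rfl, hL.symm⟩
    have hbwd : ∃ s ≤ L, altWalk f g x s = altMap f g (t + 1) (altWalk f g x t) :=
      ⟨t - 1, by omega, (altMap_succ_altWalk hf hg hx t).symm⟩
    rcases altMap_cases (f := f) (g := g) t with ⟨h1, h2⟩ | ⟨h1, h2⟩ <;>
      rcases hstep with rfl | rfl <;> simp only [h1, h2] at hfwd hbwd <;> assumption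

end AlternatingWalk

section Ends

variable {α : Type*} {f g : α → α} {x : α}

theorem exists_other_end_of_apply_eq_self (hf : Involutive f) (hg : Involutive g)
    (hx : g x = x) (hfx : f x ≠ x) (hfin : {z | ReflTransGen (stepRel f g) x z}.Finite) :
    ∃ y, y ≠ x ∧ ReflTransGen (stepRel f g) x y ∧ (f y = y ∨ g y = y) ∧
      ∀ z, ReflTransGen (stepRel f g) x z → (f z = z ∨ g z = z) → z = x ∨ z = y := by
  classical
  set p := altWalk f g x
  have hstop : ∃ L, 1 ≤ L ∧ p (L + 1) = p L := by
    obtain ⟨i, j, hij, heq⟩ :=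
      hfin.exists_lt_map_eq_of_forall_mem (f := p) (reflTransGen_altWalk x)
    by_contra! hne
    exact altWalk_ne_of_lt hf hg hx hfx (fun t ht _ => hne t ht) hij le_rfl heq
  set L := Nat.find hstop
  obtain ⟨hL1, hL⟩ : 1 ≤ L ∧ p (L + 1) = p L := Nat.find_spec hstop
  have hinj {i j : ℕ} : i < j → j ≤ L → p i ≠ p j :=
    altWalk_ne_of_lt hf hg hx hfx fun t ht htL h => Nat.find_min hstop htL ⟨ht, h⟩
  refine ⟨p L, (hinj hL1 le_rfl).symm, reflTransGen_altWalk x L, ?_, fun z hz hzfix => ?_⟩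
  · rcases altMap_cases (f := f) (g := g) L with ⟨h, -⟩ | ⟨h, -⟩
    · exact .inl (h ▸ hL)
    · exact .inr (h ▸ hL)
  obtain ⟨t, htL, rfl⟩ := altWalk_mem_of_reflTransGen hf hg hx hL hz
  rcases Nat.eq_zero_or_pos t with rfl | htpos
  · exact .inl rfl
  rcases htL.lt_or_eq with htL | rfl
  · have hfwd : altMap f g t (p t) ≠ p t := (hinj (Nat.lt_succ_self t) htL).symm
    have hbwd : altMap f g (t + 1) (p t) ≠ p t := by
      rw [altMap_succ_altWalk hf hg hx t]
      exact hinj (by omega) htL.le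
    rcases altMap_cases (f := f) (g := g) t with ⟨h1, h2⟩ | ⟨h1, h2⟩ <;>
      rw [h1] at hfwd <;> rw [h2] at hbwd <;> tauto
  · exact .inr rfl

theorem exists_other_end (hf : Involutive f) (hg : Involutive g)
    (hx : Xor (f x = x) (g x = x)) (hfin : {z | ReflTransGen (stepRel f g) x z}.Finite) :
    ∃ y, y ≠ x ∧ ReflTransGen (stepRel f g) x y ∧ (f y = y ∨ g y = y) ∧
      ∀ z, ReflTransGen (stepRel f g) x z → (f z = z ∨ g z = z) → z = x ∨ z = y := by
  rcases hx with ⟨hfx, hgx⟩ | ⟨hgx, hfx⟩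
  · rw [stepRel_comm] at hfin ⊢
    simpa only [or_comm (a := f _ = _)] using
      exists_other_end_of_apply_eq_self hg hf hfx hgx hfin
  · exact exists_other_end_of_apply_eq_self hf hg hgx hfx hfin

end Ends

section PartnerMap

variable {R : ℕ → ℕ → Prop} {S : Set ℕ} {f : ℕ → ℕ}

structure IsPartnerMap (R : ℕ → ℕ → Prop) (S : Set ℕ) (f : ℕ → ℕ) : Prop where
  involutive : Involutive f
  apply_eq_self_iff : ∀ x, f x = x ↔ x ∉ S
  rel_iff : ∀ a b, R a b ↔ a ∈ S ∧ (b = a ∨ b = f a)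

lemma exists_isPartnerMap {N : ℕ} (hR : IsEquivOn R N)
    (hd : TwoElementClasses R N) : ∃ f, IsPartnerMap R (Set.Iio N) f := by
  classical
  obtain ⟨hbound, hrefl, hsymm, -⟩ := hR
  choose! p hpx hRp hp using hd
  have hpN : ∀ x, x < N → p x < N := fun x hx => (hbound _ _ (hRp x hx)).2
  refine ⟨fun x => if x < N then p x else x, fun x => ?_, fun x => ?_, fun a b => ?_⟩
  · by_cases hx : x < N
    · have hpp := hp (p x) (hpN x hx) x (hsymm _ _ (hRp x hx))
      simp only [hx, hpN x hx, if_true]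
      exact (hpp.resolve_left (hpx x hx).symm).symm
    · simp [hx]
  · by_cases hx : x < N <;> simp [hx, hpx]
  · constructor
    · intro hab
      have ha := (hbound _ _ hab).1
      simpa [ha] using hp a ha b hab
    · rintro ⟨ha, rfl | rfl⟩
      · exact hrefl _ ha
      · simpa [show a < N from ha] using hRp a ha

lemma IsPartnerMap.shiftRel (h : IsPartnerMap R S f) (k : ℕ) :
    IsPartnerMap (shiftRel R k) {x | k ≤ x ∧ x - k ∈ S}
      (fun x => if k ≤ x then f (x - k) + k else x) := by
  refine ⟨fun x => ?_, fun x => ?_, fun a b => ?_⟩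
  · by_cases hx : k ≤ x
    · simp [hx, h.involutive (x - k), Nat.sub_add_cancel hx]
    · simp [hx]
  · by_cases hx : k ≤ x
    · simp only [hx, if_true, Set.mem_ofPred_eq, true_and, ← h.apply_eq_self_iff]
      omega
    · simp [hx]
  · simp only [_root_.shiftRel, h.rel_iff, Set.mem_ofPred_eq]
    constructor
    · rintro ⟨ha, hb, hS, hab⟩
      refine ⟨⟨ha, hS⟩, ?_⟩
      simp only [ha, if_true]
      omega
    · rintro ⟨⟨ha, hS⟩, hab⟩
      simp only [ha, if_true] at hab
      refine ⟨ha, by omega, hS, by omega⟩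

lemma IsPartnerMap.mapsTo {T : Set ℕ} (h : IsPartnerMap R S f) (hST : S ⊆ T) : Set.MapsTo f T T := by
  intro x hx
  by_cases hxS : x ∈ S
  · by_contra hfx
    have hfix : f (f x) = f x := (h.apply_eq_self_iff _).2 fun h' => hfx (hST h')
    rw [h.involutive x] at hfix
    exact (h.apply_eq_self_iff x).1 hfix.symm hxS
  · rwa [(h.apply_eq_self_iff x).2 hxS]

lemma IsPartnerMap.transGen_or_iff {R' : ℕ → ℕ → Prop} {S' : Set ℕ} {g : ℕ → ℕ}
    (hR : IsPartnerMap R S f) (hR' : IsPartnerMap R' S' g) {x z : ℕ} (hx : x ∈ S ∪ S') :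
    TransGen (fun a b => R a b ∨ R' a b) x z ↔ ReflTransGen (stepRel f g) x z := by
  constructor
  · have hstep {a b : ℕ} (hab : R a b ∨ R' a b) : ReflTransGen (stepRel f g) a b := by
      rw [hR.rel_iff, hR'.rel_iff] at hab
      rcases hab with ⟨-, rfl | rfl⟩ | ⟨-, rfl | rfl⟩
      exacts [.refl, .single (.inl rfl), .refl, .single (.inr rfl)]
    intro hxz
    induction hxz with
    | single hab => exact hstep hab
    | tail _ hab ih => exact ih.trans (hstep hab)
  · intro hxz
    induction hxz with
    | refl =>
      rcases hx with hx | hx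
      · exact .single (.inl ((hR.rel_iff x x).2 ⟨hx, .inl rfl⟩))
      · exact .single (.inr ((hR'.rel_iff x x).2 ⟨hx, .inl rfl⟩))
    | @tail a b _ hab ih =>
      rcases hab with rfl | rfl
      · by_cases ha : a ∈ S
        · exact ih.tail (.inl ((hR.rel_iff _ _).2 ⟨ha, .inr rfl⟩))
        · rwa [(hR.apply_eq_self_iff a).2 ha]
      · by_cases ha : a ∈ S'
        · exact ih.tail (.inr ((hR'.rel_iff _ _).2 ⟨ha, .inr rfl⟩))
        · rwa [(hR'.apply_eq_self_iff a).2 ha]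

end PartnerMap

section EmbOuter

variable {n m : ℕ}

lemma embOuter_injective : Injective (embOuter n m) := by
  intro a b
  unfold embOuter
  split_ifs <;> omega

lemma embOuter_lt_iff {k w : ℕ} : embOuter n m w < n + m + k ↔ w < n + k := by
  unfold embOuter
  split_ifs <;> omega

lemma embOuter_lt_or_le (w : ℕ) : embOuter n m w < n ∨ n + m ≤ embOuter n m w := by
  unfold embOuter
  split_ifs <;> omega

lemma exists_embOuter_eq {z : ℕ} (hz : z < n ∨ n + m ≤ z) : ∃ w, embOuter n m w = z := by
  rcases hz with hz | hz
  · exact ⟨z, if_pos hz⟩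
  · exact ⟨z - m, by rw [embOuter, if_neg (by omega)]; omega⟩

end EmbOuter

section GluedPartnerMaps

variable {n m k : ℕ} {R₁ R₂ : ℕ → ℕ → Prop} {f g : ℕ → ℕ}
  (hf : IsPartnerMap R₁ (Set.Iio (n + m)) f)
  (hg : IsPartnerMap (shiftRel R₂ n) {x | n ≤ x ∧ x - n ∈ Set.Iio (m + k)} g)
include hf hg

lemma genComp_iff {w z : ℕ} (hw : w < n + k) : genComp n m k R₂ R₁ w z ↔
    z < n + k ∧ ReflTransGen (stepRel f g) (embOuter n m w) (embOuter n m z) := by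
  rw [genComp, glueRel, hf.transGen_or_iff hg]
  · exact ⟨fun h => ⟨h.2.1, h.2.2⟩, fun h => ⟨hw, h⟩⟩
  · have := embOuter_lt_iff (m := m) |>.2 hw
    simp only [Set.mem_union, Set.mem_Iio, Set.mem_ofPred_eq]
    omega

lemma lt_of_reflTransGen_embOuter {w z : ℕ} (hw : w < n + k)
    (hz : ReflTransGen (stepRel f g) (embOuter n m w) z) : z < n + m + k :=
  mem_of_reflTransGen_stepRel (T := Set.Iio (n + m + k))
    (hf.mapsTo fun _ => by simp only [Set.mem_Iio]; omega)
    (hg.mapsTo fun _ => by simp only [Set.mem_Iio, Set.mem_ofPred_eq]; omega)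
    (embOuter_lt_iff.2 hw) hz

lemma xor_apply_eq_self_iff {z : ℕ} (hz : z < n + m + k) :
    Xor (f z = z) (g z = z) ↔ z < n ∨ n + m ≤ z := by
  simp only [xor_def, hf.apply_eq_self_iff, hg.apply_eq_self_iff, Set.mem_Iio,
    Set.mem_ofPred_eq]
  omega

lemma xor_apply_embOuter_eq_self {w : ℕ} (hw : w < n + k) :
    Xor (f (embOuter n m w) = embOuter n m w) (g (embOuter n m w) = embOuter n m w) :=
  (xor_apply_eq_self_iff hf hg (embOuter_lt_iff.2 hw)).2 (embOuter_lt_or_le w)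

lemma exists_embOuter_eq_of_apply_eq_self {z : ℕ} (hz : z < n + m + k)
    (hfix : f z = z ∨ g z = z) : ∃ w < n + k, embOuter n m w = z := by
  have hout : z < n ∨ n + m ≤ z := by
    simp only [hf.apply_eq_self_iff, hg.apply_eq_self_iff, Set.mem_Iio, Set.mem_ofPred_eq]
      at hfix
    omega
  obtain ⟨w, rfl⟩ := exists_embOuter_eq hout
  exact ⟨w, embOuter_lt_iff.1 hz, rfl⟩

end GluedPartnerMaps

/-- The composition in Gen of two diagrams is a diagram: all classes of
`R₂ ∗ R₁` are two-element sets. -/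
theorem genComp_of_diagrams (n m k : ℕ) (R₁ R₂ : ℕ → ℕ → Prop)
    (h₁ : IsEquivOn R₁ (n + m)) (h₂ : IsEquivOn R₂ (m + k))
    (d₁ : TwoElementClasses R₁ (n + m)) (d₂ : TwoElementClasses R₂ (m + k)) :
    TwoElementClasses (genComp n m k R₂ R₁) (n + k) := by
  obtain ⟨f, hf⟩ := exists_isPartnerMap h₁ d₁
  obtain ⟨g₀, hg₀⟩ := exists_isPartnerMap h₂ d₂
  have hg := hg₀.shiftRel n
  intro x hx
  obtain ⟨y, hyx, hxy, hyfix, huniq⟩ :=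
    exists_other_end hf.involutive hg.involutive (xor_apply_embOuter_eq_self hf hg hx)
      ((Set.finite_Iio _).subset fun _ => lt_of_reflTransGen_embOuter hf hg hx)
  obtain ⟨w, hw, rfl⟩ := exists_embOuter_eq_of_apply_eq_self hf hg
    (lt_of_reflTransGen_embOuter hf hg hx hxy) hyfix
  refine ⟨w, fun h => hyx (h ▸ rfl), (genComp_iff hf hg hx).2 ⟨hw, hxy⟩, fun z hz => ?_⟩
  obtain ⟨hz, hxz⟩ := (genComp_iff hf hg hx).1 hz
  exact (huniq _ hxz (xor_apply_embOuter_eq_self hf hg hz).or).imp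
    (fun h => embOuter_injective h) (fun h => embOuter_injective h)
end
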